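/- Let (e_0, e_1) be the standard basis of ℂ², write ā = 1 − a for a ∈ {0,1}, and let ψ'' = (1/(2√2)) Σ_{a,b ∈ {0,1}} ( e_a ⊗ e_b ⊗ e_b ⊗ e_a + e_a ⊗ e_b ⊗ e_{b̄} ⊗ e_{ā} ), a unit vector in (ℂ²)^{⊗4}. Then the reduced density matrix of |ψ''⟩⟨ψ''| on the tensor factors (1,4) equals the separable density matrix ¼ (e_0⊗e_0 + e_1⊗e_1)(e_0⊗e_0 + e_1⊗e_1)* + ¼ (e_0⊗e_1 + e_1⊗e_0)(e_0⊗e_1 + e_1⊗e_0)*, and the reduced density matrix on the factors (1,2) has exactly the two nonzero eigenvalues ½ and ½, hence von Neumann entropy log 2. -/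

import Mathlib

open scoped BigOperators ComplexOrder

/-- Von Neumann entropy of a (Hermitian) matrix: `-∑ λᵢ log λᵢ` over the eigenvalues,
with the convention that it is `0` for non-Hermitian matrices. -/
noncomputable def vNEntropy {n : Type*} [Fintype n] [DecidableEq n] (ρ : Matrix n n ℂ) : ℝ :=
  if h : ρ.IsHermitian then -∑ i, h.eigenvalues i * Real.log (h.eigenvalues i) else 0

/-- A density matrix: positive semidefinite with trace 1. -/
noncomputable def IsDensityMatrix {n : Type*} [Fintype n] [DecidableEq n] (ρ : Matrix n n ℂ) : Prop :=
  ρ.PosSemidef ∧ ρ.trace = 1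

/-- The pure density matrix `|ψ⟩⟨ψ|` associated to a vector `ψ`. -/
noncomputable def pureState {n : Type*} (ψ : n → ℂ) : Matrix n n ℂ :=
  Matrix.of fun p q => ψ p * star (ψ q)

variable {d₁ d₂ d₃ d₄ : ℕ}

/-- Reduced density matrix on factor 1 (partial trace over factors 2,3,4). -/
noncomputable def pt1 (ρ : Matrix (Fin d₁ × Fin d₂ × Fin d₃ × Fin d₄) (Fin d₁ × Fin d₂ × Fin d₃ × Fin d₄) ℂ) :
    Matrix (Fin d₁) (Fin d₁) ℂ :=
  Matrix.of fun i i' =>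
    ∑ b : Fin d₂, ∑ c : Fin d₃, ∑ k : Fin d₄, ρ (i, b, c, k) (i', b, c, k)

/-- Reduced density matrix on factor 3 (partial trace over factors 1,2,4). -/
noncomputable def pt3 (ρ : Matrix (Fin d₁ × Fin d₂ × Fin d₃ × Fin d₄) (Fin d₁ × Fin d₂ × Fin d₃ × Fin d₄) ℂ) :
    Matrix (Fin d₃) (Fin d₃) ℂ :=
  Matrix.of fun c c' =>
    ∑ i : Fin d₁, ∑ b : Fin d₂, ∑ k : Fin d₄, ρ (i, b, c, k) (i, b, c', k)

/-- Reduced density matrix on factor 4 (partial trace over factors 1,2,3). -/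
noncomputable def pt4 (ρ : Matrix (Fin d₁ × Fin d₂ × Fin d₃ × Fin d₄) (Fin d₁ × Fin d₂ × Fin d₃ × Fin d₄) ℂ) :
    Matrix (Fin d₄) (Fin d₄) ℂ :=
  Matrix.of fun k k' =>
    ∑ i : Fin d₁, ∑ b : Fin d₂, ∑ c : Fin d₃, ρ (i, b, c, k) (i, b, c, k')

/-- Reduced density matrix on factors (1,2) (partial trace over factors 3,4). -/
noncomputable def pt12 (ρ : Matrix (Fin d₁ × Fin d₂ × Fin d₃ × Fin d₄) (Fin d₁ × Fin d₂ × Fin d₃ × Fin d₄) ℂ) :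
    Matrix (Fin d₁ × Fin d₂) (Fin d₁ × Fin d₂) ℂ :=
  Matrix.of fun p q =>
    ∑ c : Fin d₃, ∑ k : Fin d₄, ρ (p.1, p.2, c, k) (q.1, q.2, c, k)

/-- Reduced density matrix on factors (1,4) (partial trace over factors 2,3). -/
noncomputable def pt14 (ρ : Matrix (Fin d₁ × Fin d₂ × Fin d₃ × Fin d₄) (Fin d₁ × Fin d₂ × Fin d₃ × Fin d₄) ℂ) :
    Matrix (Fin d₁ × Fin d₄) (Fin d₁ × Fin d₄) ℂ :=
  Matrix.of fun p q =>
    ∑ b : Fin d₂, ∑ c : Fin d₃, ρ (p.1, b, c, p.2) (q.1, b, c, q.2)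

/-- Reduced density matrix on factors (3,4) (partial trace over factors 1,2). -/
noncomputable def pt34 (ρ : Matrix (Fin d₁ × Fin d₂ × Fin d₃ × Fin d₄) (Fin d₁ × Fin d₂ × Fin d₃ × Fin d₄) ℂ) :
    Matrix (Fin d₃ × Fin d₄) (Fin d₃ × Fin d₄) ℂ :=
  Matrix.of fun p q =>
    ∑ i : Fin d₁, ∑ b : Fin d₂, ρ (i, b, p.1, p.2) (i, b, q.1, q.2)

/-- The standard basis vectors of `ℂ²`: `stdBasis a i = δ_{i a}`. -/
noncomputable def stdBasis (a : Fin 2) : Fin 2 → ℂ := fun i => if i = a then 1 else 0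

/-- The vector `ψ'' = (1/(2√2)) ∑_{a,b} (e_a⊗e_b⊗e_b⊗e_a + e_a⊗e_b⊗e_{b̄}⊗e_{ā})`
in `(ℂ²)^{⊗4}`, where `x̄ = 1 - x`. -/
noncomputable def ψSep : Fin 2 × Fin 2 × Fin 2 × Fin 2 → ℂ := fun p =>
  (1 / (2 * Real.sqrt 2 : ℝ) : ℂ) * ∑ a : Fin 2, ∑ b : Fin 2,
    (stdBasis a p.1 * stdBasis b p.2.1 * stdBasis b p.2.2.1 * stdBasis a p.2.2.2 +
     stdBasis a p.1 * stdBasis b p.2.1 * stdBasis (1 - b) p.2.2.1 * stdBasis (1 - a) p.2.2.2)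

/-- The (unnormalized) vector `e₀⊗e₀ + e₁⊗e₁` in `ℂ² ⊗ ℂ²`. -/
noncomputable def u₁ : Fin 2 × Fin 2 → ℂ := fun p =>
  stdBasis 0 p.1 * stdBasis 0 p.2 + stdBasis 1 p.1 * stdBasis 1 p.2

/-- The (unnormalized) vector `e₀⊗e₁ + e₁⊗e₀` in `ℂ² ⊗ ℂ²`. -/
noncomputable def u₂ : Fin 2 × Fin 2 → ℂ := fun p =>
  stdBasis 0 p.1 * stdBasis 1 p.2 + stdBasis 1 p.1 * stdBasis 0 p.2

/-! Up to the factor `1 / (2√2)`, `ψ''` is the indicator of the eight index tuples `(a, b, c, d)`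
with `(c, d) = (b, a)` or `(c, d) = (b̄, ā)`. Its `(1,2)`-marginal is therefore `¼ (1 + X ⊗ X)`,
`X` the Pauli flip, and `(X ⊗ X)² = 1` gives `ρ² = ½ ρ` with `tr ρ = 1`. Hence every eigenvalue
is `0` or `½`, exactly two of them are `½`, and the entropy is `-log ½ = log 2`. -/

theorem Multiset.eq_replicate_count_add_replicate_count {α : Type*} [DecidableEq α]
    {s : Multiset α} {a b : α} (hab : a ≠ b) (h : ∀ x ∈ s, x = a ∨ x = b) :
    s = replicate (s.count a) a + replicate (s.count b) b := by
  ext x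
  rw [count_add, count_replicate, count_replicate]
  by_cases hxa : a = x
  · subst hxa; simp [hab.symm]
  by_cases hxb : b = x
  · subst hxb; simp [hxa]
  simp only [hxa, hxb, if_false, add_zero]
  exact count_eq_zero.mpr fun hx => (h x hx).elim (fun e => hxa e.symm) (fun e => hxb e.symm)

namespace Matrix.IsHermitian

variable {𝕜 n : Type*} [RCLike 𝕜] [Fintype n] [DecidableEq n] {A : Matrix n n 𝕜} {c : ℝ}

theorem eigenvalues_eq_zero_or_eq_of_mul_self_eq_smul (hA : A.IsHermitian)
    (hA2 : A * A = (c : 𝕜) • A) (i : n) : hA.eigenvalues i = 0 ∨ hA.eigenvalues i = c := by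
  set μ := hA.eigenvalues i
  set v := ⇑(hA.eigenvectorBasis i)
  have hAv : A *ᵥ v = (μ : 𝕜) • v := by
    rw [hA.mulVec_eigenvectorBasis, RCLike.real_smul_eq_coe_smul (K := 𝕜)]
  have hv : v ≠ 0 := fun h0 =>
    (hA.eigenvectorBasis.orthonormal.ne_zero i) (by ext j; exact congrFun h0 j)
  have hμ : (μ : 𝕜) * μ = c * μ := by
    refine smul_left_injective 𝕜 hv ?_
    calc ((μ : 𝕜) * μ) • v = (A * A) *ᵥ v := by
          rw [← mulVec_mulVec, hAv, mulVec_smul, hAv, smul_smul]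
      _ = ((c : 𝕜) * μ) • v := by rw [hA2, smul_mulVec, hAv, smul_smul]
  have hμℝ : μ * μ = c * μ := by exact_mod_cast hμ
  have : μ * (μ - c) = 0 := by linear_combination hμℝ
  simpa [sub_eq_zero] using mul_eq_zero.mp this

theorem sum_eigenvalues_eq_one (hA : A.IsHermitian) (htr : A.trace = 1) :
    ∑ i, hA.eigenvalues i = 1 := by
  exact_mod_cast (htr ▸ hA.trace_eq_sum_eigenvalues).symm

theorem map_eigenvalues_eq_replicate (hA : A.IsHermitian) (hA2 : A * A = (c : 𝕜) • A)
    (htr : A.trace = 1) {k : ℕ} (hk : k * c = 1) :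
    Finset.univ.val.map hA.eigenvalues = .replicate k c + .replicate (Fintype.card n - k) 0 := by
  have hc : c ≠ 0 := by
    rintro rfl
    simp at hk
  set s := Finset.univ.val.map hA.eigenvalues
  have hs : s = .replicate (s.count c) c + .replicate (s.count 0) 0 :=
    Multiset.eq_replicate_count_add_replicate_count hc fun x hx => by
      obtain ⟨i, -, rfl⟩ := Multiset.mem_map.mp hx
      exact (hA.eigenvalues_eq_zero_or_eq_of_mul_self_eq_smul hA2 i).symm
  have hcount : s.count c = k := by
    have hsum : s.sum = 1 := hA.sum_eigenvalues_eq_one htr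
    rw [hs] at hsum
    simp only [Multiset.sum_add, Multiset.sum_replicate, nsmul_eq_mul, mul_zero, add_zero] at hsum
    exact_mod_cast mul_right_cancel₀ hc (hsum.trans hk.symm)
  have hcard : s.count c + s.count 0 = Fintype.card n := by
    rw [← Multiset.card_replicate (s.count c) c, ← Multiset.card_replicate (s.count 0) (0 : ℝ),
      ← Multiset.card_add, ← hs]
    simp [s]
  rw [hs, hcount, ← hcard, hcount, Nat.add_sub_cancel_left]

end Matrix.IsHermitian

theorem vNEntropy_eq_neg_log_of_mul_self_eq_smul {n : Type*} [Fintype n] [DecidableEq n]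
    {A : Matrix n n ℂ} {c : ℝ} (hA : A.IsHermitian) (hA2 : A * A = (c : ℂ) • A)
    (htr : A.trace = 1) : vNEntropy A = -Real.log c := by
  have hterm : ∀ i, hA.eigenvalues i * Real.log (hA.eigenvalues i) =
      hA.eigenvalues i * Real.log c := fun i => by
    rcases hA.eigenvalues_eq_zero_or_eq_of_mul_self_eq_smul hA2 i with h | h <;> rw [h]; simp
  rw [vNEntropy, dif_pos hA, Finset.sum_congr rfl fun i _ => hterm i, ← Finset.sum_mul,
    hA.sum_eigenvalues_eq_one htr, one_mul]

open scoped Kronecker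

def pauliX : Matrix (Fin 2) (Fin 2) ℂ := !![0, 1; 1, 0]

theorem pauliX_mul_self : pauliX * pauliX = 1 := by
  simp [pauliX, Matrix.one_fin_two]

theorem pauliX_isHermitian : pauliX.IsHermitian := by
  ext i j
  fin_cases i <;> fin_cases j <;> simp [pauliX]

theorem trace_pauliX : pauliX.trace = 0 := by
  simp [pauliX, Matrix.trace_fin_two]

noncomputable def ρ₁₂ : Matrix (Fin 2 × Fin 2) (Fin 2 × Fin 2) ℂ :=
  (1 / 4 : ℂ) • (1 + pauliX ⊗ₖ pauliX)

theorem ρ₁₂_isHermitian : ρ₁₂.IsHermitian := by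
  simp [ρ₁₂, Matrix.IsHermitian, Matrix.conjTranspose_kronecker, pauliX_isHermitian.eq]

theorem ρ₁₂_mul_self : ρ₁₂ * ρ₁₂ = ((1 / 2 : ℝ) : ℂ) • ρ₁₂ := by
  have hXX : (pauliX ⊗ₖ pauliX) * (pauliX ⊗ₖ pauliX) = 1 := by
    rw [← Matrix.mul_kronecker_mul, pauliX_mul_self, Matrix.one_kronecker_one]
  simp only [ρ₁₂, smul_mul_smul, add_mul, mul_add, one_mul, mul_one, hXX]
  push_cast
  module

theorem trace_ρ₁₂ : ρ₁₂.trace = 1 := by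
  simp [ρ₁₂, Matrix.trace_add, Matrix.trace_kronecker, trace_pauliX]

noncomputable def ψSepIndicator (p : Fin 2 × Fin 2 × Fin 2 × Fin 2) : ℂ :=
  if p.2.2 = (p.2.1, p.1) ∨ p.2.2 = (1 - p.2.1, 1 - p.1) then 1 else 0

theorem ψSep_eq (p : Fin 2 × Fin 2 × Fin 2 × Fin 2) :
    ψSep p = ((1 / (2 * Real.sqrt 2) : ℝ) : ℂ) * ψSepIndicator p := by
  fin_cases p <;> simp [ψSep, stdBasis, ψSepIndicator, Fin.sum_univ_two]

theorem one_div_two_mul_sqrt_two_sq : (1 / (2 * Real.sqrt 2)) ^ 2 = (1 / 8 : ℝ) := by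
  rw [div_pow, mul_pow, Real.sq_sqrt zero_le_two]
  norm_num

theorem pureState_ψSep_apply (p q : Fin 2 × Fin 2 × Fin 2 × Fin 2) :
    pureState ψSep p q = 1 / 8 * (ψSepIndicator p * ψSepIndicator q) := by
  have hreal : star (ψSepIndicator q) = ψSepIndicator q := by
    unfold ψSepIndicator; split_ifs <;> simp
  rw [pureState, Matrix.of_apply, ψSep_eq, ψSep_eq, star_mul', hreal, Complex.star_def,
    Complex.conj_ofReal]
  have h8 : ((1 / (2 * Real.sqrt 2) : ℝ) : ℂ) * ((1 / (2 * Real.sqrt 2) : ℝ) : ℂ) = 1 / 8 := by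
    rw [← Complex.ofReal_mul, ← sq, one_div_two_mul_sqrt_two_sq]
    norm_num
  linear_combination (ψSepIndicator p * ψSepIndicator q) * h8

theorem sum_norm_ψSep_sq : ∑ p, ‖ψSep p‖ ^ 2 = 1 := by
  simp only [ψSep_eq, norm_mul, mul_pow, Complex.norm_real, Real.norm_eq_abs, sq_abs,
    one_div_two_mul_sqrt_two_sq]
  norm_num [Fintype.sum_prod_type, Fin.sum_univ_two, ψSepIndicator]

theorem pt12_pureState_ψSep : pt12 (pureState ψSep) = ρ₁₂ := by
  ext p q
  simp only [pt12, Matrix.of_apply, pureState_ψSep_apply]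
  fin_cases p <;> fin_cases q <;>
    norm_num [ψSepIndicator, ρ₁₂, pauliX, Fin.sum_univ_two, Prod.ext_iff]

theorem pt14_pureState_ψSep :
    pt14 (pureState ψSep) = (1 / 4 : ℂ) • (pureState u₁ + pureState u₂) := by
  ext p q
  simp only [pt14, Matrix.of_apply, pureState_ψSep_apply]
  fin_cases p <;> fin_cases q <;>
    norm_num [ψSepIndicator, Fin.sum_univ_two, u₁, u₂, stdBasis, pureState]

/-- For the unit vector
`ψ'' = (1/(2√2)) ∑_{a,b} (e_a⊗e_b⊗e_b⊗e_a + e_a⊗e_b⊗e_{b̄}⊗e_{ā})` in `(ℂ²)^{⊗4}`,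
the reduced density matrix on factors (1,4) is the separable state
`¼ u₁u₁* + ¼ u₂u₂*` with `u₁ = e₀⊗e₀+e₁⊗e₁`, `u₂ = e₀⊗e₁+e₁⊗e₀`, and the reduced
density matrix on factors (1,2) has exactly the nonzero eigenvalues `½, ½` (the remaining
eigenvalues being `0`), hence entropy `log 2`. -/
theorem separable_purification_entropy_log_two :
    (∑ p, ‖ψSep p‖ ^ 2 = 1) ∧
    pt14 (pureState ψSep) = (1 / 4 : ℂ) • (pureState u₁ + pureState u₂) ∧
    (∃ h : (pt12 (pureState ψSep)).IsHermitian,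
        Finset.univ.val.map h.eigenvalues = ({1 / 2, 1 / 2, 0, 0} : Multiset ℝ)) ∧
    vNEntropy (pt12 (pureState ψSep)) = Real.log 2 := by
  refine ⟨sum_norm_ψSep_sq, pt14_pureState_ψSep, ?_, ?_⟩ <;> rw [pt12_pureState_ψSep]
  · refine ⟨ρ₁₂_isHermitian, ?_⟩
    rw [ρ₁₂_isHermitian.map_eigenvalues_eq_replicate (c := 1 / 2) ρ₁₂_mul_self trace_ρ₁₂
      (k := 2) (by norm_num)]
    rfl
  · rw [vNEntropy_eq_neg_log_of_mul_self_eq_smul ρ₁₂_isHermitian ρ₁₂_mul_self trace_ρ₁₂, one_div,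
      Real.log_inv, neg_neg]
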